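/- arXiv:2604.27042 — 2 statements merged into one kernel-verified Lean document; each statement's English description precedes it below -/
import Mathlib

section
/- The maximal singlet fraction of a quantum-classical state splits into a convex combination: if ρ_ABY = Σ_y p(y) ρ_AB^y ⊗ |y⟩⟨y|_Y with (p(y)) a probability distribution, then F_Φ(ρ_ABY) = Σ_y p(y) F_Φ(ρ_AB^y), where F_Φ(σ) := sup over quantum channels N from the non-A systems to Â of ⟨Φ|(id_A ⊗ N)(σ)|Φ⟩ and |Φ⟩ is the maximally entangled state of rank d_A on A⊗Â. Moreover the optimum is attained by first measuring Y and then applying a y-dependent recovery channel on B. -/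
open Matrix BigOperators
open scoped ComplexOrder

/-- The maximally entangled unit vector `|Φ⟩ = (1/√d) Σ_i |ii⟩`. -/
noncomputable def mesVec (d : ℕ) : Fin d × Fin d → ℂ :=
  fun p => if p.1 = p.2 then (1 / (Real.sqrt d : ℂ)) else 0

/-- The maximally entangled state `Φ^d = |Φ⟩⟨Φ|` as a matrix. -/
noncomputable def maxEnt (d : ℕ) :
    Matrix (Fin d × Fin d) (Fin d × Fin d) ℂ :=
  Matrix.of fun p q => if p.1 = p.2 ∧ q.1 = q.2 then (1 / (d : ℂ)) else 0

/-- A quantum channel: a linear, completely positive (Choi matrix positive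
semidefinite), trace-preserving map between matrix algebras. -/
def IsCPTP {n m : Type*} [Fintype n] [DecidableEq n] [Fintype m] [DecidableEq m]
    (f : Matrix n n ℂ → Matrix m m ℂ) : Prop :=
  (∀ M N : Matrix n n ℂ, f (M + N) = f M + f N) ∧
  (∀ (c : ℂ) (M : Matrix n n ℂ), f (c • M) = c • f M) ∧
  (Matrix.PosSemidef
    (Matrix.of fun (p q : n × m) =>
      f (Matrix.single p.1 q.1 (1 : ℂ)) p.2 q.2)) ∧
  (∀ M : Matrix n n ℂ, (f M).trace = M.trace)

/-- The map `id_R ⊗ f` acting on operators on `R ⊗ n`. -/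
def idTensor {r n m : Type*}
    (f : Matrix n n ℂ → Matrix m m ℂ)
    (M : Matrix (r × n) (r × n) ℂ) : Matrix (r × m) (r × m) ℂ :=
  Matrix.of fun p q => f (Matrix.of fun b b' => M (p.1, b) (q.1, b')) p.2 q.2

/-- The maximal singlet fraction of a state on `A ⊗ W` (`A ≅ ℂ^{d_A}`):
the supremum over quantum channels `N : W → Â ≅ A` of
`⟨Φ|(id_A ⊗ N)(σ)|Φ⟩` with `|Φ⟩` the maximally entangled vector of rank `d_A`. -/
noncomputable def singletFraction {W : Type*} [Fintype W] [DecidableEq W]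
    (dA : ℕ) (σ : Matrix (Fin dA × W) (Fin dA × W) ℂ) : ℝ :=
  sSup {x : ℝ | ∃ f : Matrix W W ℂ → Matrix (Fin dA) (Fin dA) ℂ,
    IsCPTP f ∧
      x = (star (mesVec dA) ⬝ᵥ (idTensor f σ).mulVec (mesVec dA)).re}
open Kronecker

section Aux

variable {W m : Type*} [Fintype W] [DecidableEq W] [Fintype m] [DecidableEq m]

/-- Choi matrix of a map. -/
def choiM (f : Matrix W W ℂ → Matrix m m ℂ) : Matrix (W × m) (W × m) ℂ :=
  Matrix.of fun p q => f (Matrix.single p.1 q.1 (1 : ℂ)) p.2 q.2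

/-- The set of Choi matrices of CPTP maps. -/
def ChoiSet (W m : Type*) [Fintype W] [DecidableEq W] [Fintype m] [DecidableEq m] :
    Set (Matrix (W × m) (W × m) ℂ) :=
  {C | C.PosSemidef ∧ ∀ k l : W, (∑ a, C (k, a) (l, a)) = if k = l then (1:ℂ) else 0}

/-- The map associated to a Choi matrix. -/
noncomputable def ofChoi (C : Matrix (W × m) (W × m) ℂ) : Matrix W W ℂ → Matrix m m ℂ :=
  fun M => Matrix.of fun i j => ∑ k, ∑ l, M k l * C (k, i) (l, j)

theorem trace_stdBasis (k l : W) :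
    (Matrix.single k l (1:ℂ)).trace = if k = l then (1:ℂ) else 0 := by
  simp only [Matrix.trace, Matrix.diag, Matrix.single, Matrix.of_apply]
  by_cases h : k = l
  · subst h; simp
  · rw [if_neg h]
    refine Finset.sum_eq_zero fun a _ => if_neg ?_
    rintro ⟨rfl, rfl⟩; exact h rfl

theorem choiM_mem {f : Matrix W W ℂ → Matrix m m ℂ} (hf : IsCPTP f) :
    choiM f ∈ ChoiSet W m := by
  refine ⟨hf.2.2.1, fun k l => ?_⟩
  have := hf.2.2.2 (Matrix.single k l (1:ℂ))
  rw [trace_stdBasis] at this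
  rw [← this]
  rfl

theorem ofChoi_choiM {f : Matrix W W ℂ → Matrix m m ℂ}
    (hadd : ∀ M N : Matrix W W ℂ, f (M + N) = f M + f N)
    (hsmul : ∀ (c : ℂ) (M : Matrix W W ℂ), f (c • M) = c • f M)
    (M : Matrix W W ℂ) : f M = ofChoi (choiM f) M := by
  let f' : Matrix W W ℂ →ₗ[ℂ] Matrix m m ℂ :=
    { toFun := f, map_add' := hadd, map_smul' := hsmul }
  have hM : M = ∑ k : W, ∑ l : W, (M k l) • Matrix.single k l (1:ℂ) := by
    conv_lhs => rw [Matrix.matrix_eq_sum_single M]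
    simp [Matrix.smul_single]
  ext i j
  have key : f M = ∑ k : W, ∑ l : W, (M k l) • f (Matrix.single k l (1:ℂ)) := by
    have h1 : f' M = ∑ k : W, ∑ l : W, f' (Matrix.single k l (M k l)) := by
      conv_lhs => rw [show M = ∑ k : W, ∑ l : W, Matrix.single k l (M k l) from
        Matrix.matrix_eq_sum_single M]
      rw [map_sum]
      exact Finset.sum_congr rfl fun k _ => map_sum f' _ _
    have h2 : ∀ k l : W, f' (Matrix.single k l (M k l))
        = (M k l) • f' (Matrix.single k l (1:ℂ)) := by
      intro k l
      rw [← _root_.map_smul, Matrix.smul_single, smul_eq_mul, mul_one]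
    have := h1; simp only [h2] at this; exact this
  rw [key]
  simp only [ofChoi, choiM, Matrix.of_apply, Finset.sum_apply, Matrix.sum_apply,
    Matrix.smul_apply, smul_eq_mul]

theorem isCPTP_ofChoi {C : Matrix (W × m) (W × m) ℂ} (hC : C ∈ ChoiSet W m) :
    IsCPTP (ofChoi C) := by
  obtain ⟨hpsd, htr⟩ := hC
  refine ⟨?_, ?_, ?_, ?_⟩
  · intro M N; ext i j
    simp [ofChoi, add_mul, Finset.sum_add_distrib]
  · intro c M; ext i j
    simp [ofChoi, Finset.mul_sum, mul_assoc]
  · have : (Matrix.of fun (p q : W × m) =>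
        ofChoi C (Matrix.single p.1 q.1 (1 : ℂ)) p.2 q.2) = C := by
      ext p q
      simp only [Matrix.of_apply, ofChoi, Matrix.single, ite_mul, one_mul,
        zero_mul]
      simp [ite_and, Finset.sum_ite_eq, Finset.sum_ite_eq']
    rw [this]; exact hpsd
  · intro M
    simp only [Matrix.trace, Matrix.diag, ofChoi, Matrix.of_apply]
    rw [Finset.sum_comm]
    refine Finset.sum_congr rfl fun k _ => ?_
    rw [Finset.sum_comm]
    have : ∀ l : W, (∑ i, M k l * C (k, i) (l, i)) = M k l * (if k = l then 1 else 0) := by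
      intro l; rw [← Finset.mul_sum, htr]
    simp only [this, mul_ite, mul_one, mul_zero, Finset.sum_ite_eq, Finset.mem_univ,
      if_true]

end Aux

section Bound

variable {n : Type*} [Fintype n] [DecidableEq n]

theorem psd_quad {C : Matrix n n ℂ} (hC : C.PosSemidef) (p q : n) (c : ℂ) :
    0 ≤ C p p + C p q * c + star c * C q p + star c * (C q q * c) := by
  have h := hC.dotProduct_mulVec_nonneg (Pi.single p 1 + Pi.single q c)
  rw [Matrix.mulVec_add, Matrix.mulVec_single, Matrix.mulVec_single] at h
  rw [star_add, ← Pi.single_star, ← Pi.single_star] at h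
  rw [add_dotProduct, dotProduct_add, dotProduct_add] at h
  simp only [single_dotProduct, star_one, one_mul, Pi.add_apply, Pi.smul_apply,
    op_smul_eq_mul, Matrix.col_apply] at h
  convert h using 1
  ring

theorem psd_diag_re {C : Matrix n n ℂ} (hC : C.PosSemidef) (a : n) :
    0 ≤ (C a a).re ∧ (C a a).im = 0 := by
  have h := psd_quad hC a a 0
  simp only [mul_zero, star_zero, zero_mul, add_zero] at h
  rw [Complex.le_def] at h
  exact ⟨by simpa using h.1, by simpa using h.2.symm⟩

theorem psd_diag_le_trace {C : Matrix n n ℂ} (hC : C.PosSemidef) (a : n) :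
    (C a a).re ≤ C.trace.re := by
  have : C.trace.re = ∑ b, (C b b).re := by
    simp [Matrix.trace, Matrix.diag, Complex.re_sum]
  rw [this]
  exact Finset.single_le_sum (fun b _ => (psd_diag_re hC b).1) (Finset.mem_univ a)

theorem psd_trace_re_nonneg {C : Matrix n n ℂ} (hC : C.PosSemidef) :
    0 ≤ C.trace.re := by
  have : C.trace.re = ∑ b, (C b b).re := by
    simp [Matrix.trace, Matrix.diag, Complex.re_sum]
  rw [this]
  exact Finset.sum_nonneg fun b _ => (psd_diag_re hC b).1

theorem psd_entry_bound {C : Matrix n n ℂ} (hC : C.PosSemidef) (p q : n) :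
    ‖C p q‖ ≤ C.trace.re := by
  have htr0 : 0 ≤ C.trace.re := psd_trace_re_nonneg hC
  by_cases hz : C p q = 0
  · simp [hz, htr0]
  set z := C p q with hzdef
  set r := ‖z‖ with hrdef
  have hr0 : 0 < r := norm_pos_iff.mpr hz
  have hrne : (r : ℂ) ≠ 0 := by exact_mod_cast ne_of_gt hr0
  have hqp : C q p = star z := by
    have h2 := congrFun (congrFun hC.1 q) p
    simpa [Matrix.conjTranspose_apply] using h2.symm
  set c : ℂ := -(star z) / r with hcdef
  have hzz : z * star z = (r : ℂ) ^ 2 := by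
    rw [show (star z) = (starRingEnd ℂ) z from rfl, Complex.mul_conj,
      Complex.normSq_eq_norm_sq, ← hrdef]
    push_cast; ring
  have hzc : z * c = -(r : ℂ) := by
    rw [hcdef, mul_div_assoc', mul_neg, hzz, neg_div]
    congr 1
    rw [pow_two, mul_div_assoc, div_self hrne, mul_one]
  have hcz : star c * star z = -(r : ℂ) := by
    have hs : star (z * c) = star c * star z := StarMul.star_mul z c
    rw [← hs, hzc, star_neg]
    congr 1
    exact Complex.conj_ofReal r
  have hcc : star c * c = 1 := by
    rw [show star c = (starRingEnd ℂ) c from rfl, ← Complex.normSq_eq_conj_mul_self,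
      Complex.normSq_eq_norm_sq]
    have : ‖c‖ = 1 := by
      rw [hcdef, norm_div, norm_neg, norm_star, Complex.norm_real, Real.norm_eq_abs,
        abs_of_pos hr0, ← hrdef, div_self (ne_of_gt hr0)]
    rw [this]
    norm_num
  have h := psd_quad hC p q c
  rw [← hzdef, hqp, hzc, hcz] at h
  have h2 : star c * (C q q * c) = C q q := by
    rw [mul_comm (C q q) c, ← mul_assoc, hcc, one_mul]
  rw [h2, Complex.le_def] at h
  have hre := h.1
  simp only [Complex.add_re, Complex.neg_re, Complex.ofReal_re, Complex.zero_re] at hre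
  have hp' := psd_diag_le_trace hC p
  have hq' := psd_diag_le_trace hC q
  linarith

end Bound


section Compact

variable {W m : Type*} [Fintype W] [DecidableEq W] [Fintype m] [DecidableEq m]

theorem choiSet_trace {C : Matrix (W × m) (W × m) ℂ} (hC : C ∈ ChoiSet W m) :
    C.trace = (Fintype.card W : ℂ) := by
  have : C.trace = ∑ k : W, ∑ a : m, C (k, a) (k, a) := by
    simp only [Matrix.trace, Matrix.diag]
    exact Fintype.sum_prod_type (f := fun x : W × m => C x x)
  rw [this]
  have : ∀ k : W, (∑ a : m, C (k, a) (k, a)) = 1 := fun k => by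
    rw [hC.2 k k, if_pos rfl]
  simp [this, Finset.card_univ]

theorem isClosed_nonnegC : IsClosed {z : ℂ | 0 ≤ z} := by
  have : {z : ℂ | 0 ≤ z} = Complex.re ⁻¹' Set.Ici 0 ∩ Complex.im ⁻¹' {0} := by
    ext z
    simp only [Set.mem_setOf_eq, Complex.le_def, Set.mem_inter_iff, Set.mem_preimage,
      Set.mem_Ici, Set.mem_singleton_iff, Complex.zero_re, Complex.zero_im]
    tauto
  rw [this]
  exact (isClosed_Ici.preimage Complex.continuous_re).inter
    (isClosed_singleton.preimage Complex.continuous_im)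

theorem isClosed_choiSet : IsClosed (ChoiSet W m) := by
  have h1 : IsClosed {C : Matrix (W × m) (W × m) ℂ | C.IsHermitian} :=
    isClosed_eq continuous_id.matrix_conjTranspose continuous_id
  have h2 : IsClosed {C : Matrix (W × m) (W × m) ℂ |
      ∀ x : (W × m) → ℂ, 0 ≤ star x ⬝ᵥ C.mulVec x} := by
    have he : {C : Matrix (W × m) (W × m) ℂ | ∀ x : (W × m) → ℂ, 0 ≤ star x ⬝ᵥ C.mulVec x}
        = ⋂ x : (W × m) → ℂ, (fun C : Matrix (W × m) (W × m) ℂ =>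
            star x ⬝ᵥ C.mulVec x) ⁻¹' {z | 0 ≤ z} := by
      ext C; simp only [Set.mem_setOf_eq, Set.mem_iInter, Set.mem_preimage]
    rw [he]
    refine isClosed_iInter fun x => IsClosed.preimage ?_ isClosed_nonnegC
    have : (fun C : Matrix (W × m) (W × m) ℂ => star x ⬝ᵥ C.mulVec x)
        = fun C => ∑ b, star (x b) * ∑ b', C b b' * x b' := rfl
    rw [this]
    exact continuous_finset_sum _ fun b _ => continuous_const.mul <|
      continuous_finset_sum _ fun b' _ => (continuous_id.matrix_elem b b').mul continuous_const
  have h3 : IsClosed {C : Matrix (W × m) (W × m) ℂ |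
      ∀ k l : W, (∑ a, C (k, a) (l, a)) = if k = l then (1:ℂ) else 0} := by
    have he : {C : Matrix (W × m) (W × m) ℂ |
        ∀ k l : W, (∑ a, C (k, a) (l, a)) = if k = l then (1:ℂ) else 0}
        = ⋂ k : W, ⋂ l : W, {C : Matrix (W × m) (W × m) ℂ |
            (∑ a, C (k, a) (l, a)) = if k = l then (1:ℂ) else 0} := by
      ext C; simp only [Set.mem_setOf_eq, Set.mem_iInter]
    rw [he]
    exact isClosed_iInter fun k => isClosed_iInter fun l =>
      isClosed_eq (continuous_finset_sum _ fun a _ => continuous_id.matrix_elem _ _)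
        continuous_const
  have : ChoiSet W m = ({C : Matrix (W × m) (W × m) ℂ | C.IsHermitian} ∩
      {C | ∀ x : (W × m) → ℂ, 0 ≤ star x ⬝ᵥ C.mulVec x}) ∩
      {C | ∀ k l : W, (∑ a, C (k, a) (l, a)) = if k = l then (1:ℂ) else 0} := by
    ext C
    simp only [ChoiSet, Set.mem_setOf_eq, Set.mem_inter_iff, Matrix.posSemidef_iff_dotProduct_mulVec, and_assoc]
  rw [this]
  exact (h1.inter h2).inter h3

theorem isCompact_choiSet : IsCompact (ChoiSet W m) := by
  set R : ℝ := (Fintype.card W : ℝ) with hR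
  have hsub : ChoiSet W m ⊆ {C | ∀ p q, C p q ∈ Metric.closedBall (0:ℂ) R} := by
    intro C hC p q
    simp only [Metric.mem_closedBall, dist_zero_right, Set.mem_setOf_eq]
    have h := psd_entry_bound hC.1 p q
    rw [choiSet_trace hC] at h
    simpa using h
  have hcomp : IsCompact {C : Matrix (W × m) (W × m) ℂ |
      ∀ p q, C p q ∈ Metric.closedBall (0:ℂ) R} := by
    have he : {C : Matrix (W × m) (W × m) ℂ | ∀ p q, C p q ∈ Metric.closedBall (0:ℂ) R}
        = Set.pi Set.univ (fun _ : W × m =>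
            Set.pi Set.univ (fun _ : W × m => Metric.closedBall (0:ℂ) R)) := by
      ext C
      constructor
      · intro h
        exact Set.mem_univ_pi.mpr fun p => Set.mem_univ_pi.mpr fun q => h p q
      · intro h p q
        exact Set.mem_univ_pi.mp (Set.mem_univ_pi.mp h p) q
    rw [he]
    exact isCompact_univ_pi fun _ => isCompact_univ_pi fun _ => isCompact_closedBall _ _
  exact hcomp.of_isClosed_subset isClosed_choiSet hsub

theorem choiSet_nonempty [Nonempty m] : (ChoiSet W m).Nonempty := by
  have hpos : (0:ℝ) < (Fintype.card m : ℝ) := by exact_mod_cast Fintype.card_pos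
  have hne : ((Fintype.card m : ℝ) : ℂ) ≠ 0 := by exact_mod_cast ne_of_gt hpos
  set c : ℂ := Complex.ofReal ((Fintype.card m : ℝ))⁻¹ with hc
  have hcstar : star c = c := by
    rw [hc]; exact Complex.conj_ofReal _
  refine ⟨c • (1 : Matrix (W × m) (W × m) ℂ), Matrix.PosSemidef.of_dotProduct_mulVec_nonneg ?_ fun x => ?_, fun k l => ?_⟩
  · show (c • (1 : Matrix (W × m) (W × m) ℂ))ᴴ = _
    rw [Matrix.conjTranspose_smul, Matrix.conjTranspose_one, hcstar]
  · rw [Matrix.smul_mulVec, Matrix.one_mulVec, dotProduct_smul]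
    have h0 : 0 ≤ star x ⬝ᵥ x := dotProduct_star_self_nonneg x
    have hc0 : 0 ≤ c := by
      rw [hc]
      exact_mod_cast Complex.zero_le_real.mpr (by positivity)
    rw [smul_eq_mul]
    exact mul_nonneg hc0 h0
  · have : ∀ a : m, (c • (1 : Matrix (W × m) (W × m) ℂ)) (k, a) (l, a)
        = c * (if k = l then 1 else 0) := by
      intro a
      rw [Matrix.smul_apply, Matrix.one_apply, smul_eq_mul]
      congr 1
      by_cases h : k = l
      · subst h; simp
      · rw [if_neg h, if_neg (by simp [Prod.ext_iff, h])]
    rw [Finset.sum_congr rfl fun a _ => this a, Finset.sum_const, Finset.card_univ,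
      nsmul_eq_mul]
    by_cases h : k = l
    · rw [if_pos h, mul_one, hc]
      rw [← Complex.ofReal_natCast, ← Complex.ofReal_mul, ← Complex.ofReal_one]
      congr 1
      field_simp
    · rw [if_neg h, mul_zero, mul_zero]

end Compact

section Value

variable {W : Type*} [Fintype W] [DecidableEq W]

/-- The figure of merit of a particular recovery map. -/
noncomputable def SFv {dA : ℕ} (f : Matrix W W ℂ → Matrix (Fin dA) (Fin dA) ℂ)
    (σ : Matrix (Fin dA × W) (Fin dA × W) ℂ) : ℝ :=
  (star (mesVec dA) ⬝ᵥ (idTensor f σ).mulVec (mesVec dA)).re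

theorem singletFraction_def {dA : ℕ} (σ : Matrix (Fin dA × W) (Fin dA × W) ℂ) :
    singletFraction dA σ = sSup {x : ℝ | ∃ f, IsCPTP f ∧ x = SFv f σ} := rfl

theorem idTensor_congr {r n m : Type*} {f g : Matrix n n ℂ → Matrix m m ℂ}
    (h : ∀ X, f X = g X) (σ : Matrix (r × n) (r × n) ℂ) :
    idTensor f σ = idTensor g σ := by
  ext p q
  simp only [idTensor, Matrix.of_apply, h]

theorem SFset_eq {dA : ℕ} (σ : Matrix (Fin dA × W) (Fin dA × W) ℂ) :
    {x : ℝ | ∃ f, IsCPTP f ∧ x = SFv f σ}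
      = (fun C => SFv (ofChoi C) σ) '' ChoiSet W (Fin dA) := by
  ext x
  constructor
  · rintro ⟨f, hf, rfl⟩
    refine ⟨choiM f, choiM_mem hf, ?_⟩
    unfold SFv
    rw [idTensor_congr (fun X => (ofChoi_choiM hf.1 hf.2.1 X)) σ]
  · rintro ⟨C, hC, rfl⟩
    exact ⟨ofChoi C, isCPTP_ofChoi hC, rfl⟩

theorem continuous_SFv {dA : ℕ} (σ : Matrix (Fin dA × W) (Fin dA × W) ℂ) :
    Continuous fun C : Matrix (W × Fin dA) (W × Fin dA) ℂ => SFv (ofChoi C) σ := by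
  have he : (fun C : Matrix (W × Fin dA) (W × Fin dA) ℂ => SFv (ofChoi C) σ)
      = fun C => (∑ p : Fin dA × Fin dA, star (mesVec dA p) *
          ∑ q : Fin dA × Fin dA, (∑ k, ∑ l, σ (p.1, k) (q.1, l) * C (k, p.2) (l, q.2))
            * mesVec dA q).re := by
    funext C
    simp only [SFv, dotProduct, Matrix.mulVec, idTensor, ofChoi, Matrix.of_apply,
      Pi.star_apply]
  rw [he]
  refine Complex.continuous_re.comp ?_
  refine continuous_finset_sum _ fun p _ => Continuous.mul continuous_const ?_
  refine continuous_finset_sum _ fun q _ => Continuous.mul ?_ continuous_const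
  refine continuous_finset_sum _ fun k _ => continuous_finset_sum _ fun l _ =>
    Continuous.mul continuous_const ?_
  exact continuous_id.matrix_elem _ _

theorem sf_bddAbove {dA : ℕ} (σ : Matrix (Fin dA × W) (Fin dA × W) ℂ) :
    BddAbove {x : ℝ | ∃ f, IsCPTP f ∧ x = SFv f σ} := by
  rw [SFset_eq]
  exact (isCompact_choiSet.image (continuous_SFv σ)).bddAbove

theorem SFv_le_singletFraction {dA : ℕ} {f : Matrix W W ℂ → Matrix (Fin dA) (Fin dA) ℂ}
    (hf : IsCPTP f) (σ : Matrix (Fin dA × W) (Fin dA × W) ℂ) :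
    SFv f σ ≤ singletFraction dA σ :=
  le_csSup (sf_bddAbove σ) ⟨f, hf, rfl⟩

theorem sf_attained {dA : ℕ} (hdA : 0 < dA) (σ : Matrix (Fin dA × W) (Fin dA × W) ℂ) :
    ∃ f, IsCPTP f ∧ SFv f σ = singletFraction dA σ := by
  have : Nonempty (Fin dA) := ⟨⟨0, hdA⟩⟩
  have hSet := SFset_eq σ
  have hcomp : IsCompact {x : ℝ | ∃ f, IsCPTP f ∧ x = SFv f σ} := by
    rw [hSet]; exact isCompact_choiSet.image (continuous_SFv σ)
  have hne : {x : ℝ | ∃ f, IsCPTP f ∧ x = SFv f σ}.Nonempty := by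
    rw [hSet]; exact choiSet_nonempty.image _
  have hmem := hcomp.sSup_mem hne
  rw [← singletFraction_def σ] at hmem
  obtain ⟨f, hf, hx⟩ := hmem
  exact ⟨f, hf, hx.symm⟩

theorem sf_nonempty_set {dA : ℕ} (hdA : 0 < dA) (σ : Matrix (Fin dA × W) (Fin dA × W) ℂ) :
    {x : ℝ | ∃ f, IsCPTP f ∧ x = SFv f σ}.Nonempty := by
  have : Nonempty (Fin dA) := ⟨⟨0, hdA⟩⟩
  rw [SFset_eq]
  exact choiSet_nonempty.image _

theorem quad_sum {ι n : Type*} [Fintype n] (s : Finset ι) (c : ι → ℂ)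
    (N : ι → Matrix n n ℂ) (v : n → ℂ) :
    star v ⬝ᵥ (∑ i ∈ s, c i • N i).mulVec v
      = ∑ i ∈ s, c i * (star v ⬝ᵥ (N i).mulVec v) := by
  classical
  induction s using Finset.induction with
  | empty => simp
  | insert _ _ h ih =>
    rw [Finset.sum_insert h, Finset.sum_insert h, Matrix.add_mulVec, dotProduct_add, ih,
      Matrix.smul_mulVec, dotProduct_smul, smul_eq_mul]

end Value

section Embed

variable {B Y m : Type*} [Fintype B] [DecidableEq B] [Fintype Y] [DecidableEq Y]
  [Fintype m] [DecidableEq m]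

/-- Embed an operator on `B` into the `y`-th diagonal block of `B ⊗ Y`. -/
def embedY (y : Y) (X : Matrix B B ℂ) : Matrix (B × Y) (B × Y) ℂ :=
  Matrix.of fun p q => if p.2 = y ∧ q.2 = y then X p.1 q.1 else 0

theorem embedY_std (y : Y) (b b' : B) :
    embedY y (Matrix.single b b' (1:ℂ))
      = Matrix.single (b, y) (b', y) (1:ℂ) := by
  ext ⟨b0, y0⟩ ⟨b1, y1⟩
  simp only [embedY, Matrix.single, Matrix.of_apply, Prod.mk.injEq]
  by_cases h0 : y0 = y <;> by_cases h1 : y1 = y <;>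
    by_cases hb0 : b = b0 <;> by_cases hb1 : b' = b1 <;>
    simp_all [eq_comm] <;> tauto

theorem embedY_trace (y : Y) (X : Matrix B B ℂ) : (embedY y X).trace = X.trace := by
  simp only [Matrix.trace, Matrix.diag, embedY, Matrix.of_apply]
  rw [Fintype.sum_prod_type]
  refine Finset.sum_congr rfl fun b _ => ?_
  rw [Finset.sum_eq_single y]
  · simp
  · intro y0 _ h; simp [h]
  · intro h; exact absurd (Finset.mem_univ _) h

theorem comp_embedY_isCPTP {f : Matrix (B × Y) (B × Y) ℂ → Matrix m m ℂ}
    (hf : IsCPTP f) (y : Y) : IsCPTP (fun X => f (embedY y X)) := by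
  obtain ⟨hadd, hsmul, hpsd, htr⟩ := hf
  have hembadd : ∀ X X' : Matrix B B ℂ, embedY y (X + X') = embedY y X + embedY y X' := by
    intro X X'; ext p q; simp only [embedY, Matrix.of_apply, Matrix.add_apply]
    split_ifs <;> simp
  have hembsmul : ∀ (c : ℂ) (X : Matrix B B ℂ), embedY y (c • X) = c • embedY y X := by
    intro c X; ext p q; simp only [embedY, Matrix.of_apply, Matrix.smul_apply, smul_eq_mul]
    split_ifs <;> simp
  refine ⟨fun X X' => by simp only []; rw [hembadd, hadd], fun c X => by simp only []; rw [hembsmul, hsmul], ?_, ?_⟩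
  · have he : (Matrix.of fun (p q : B × m) =>
        (fun X => f (embedY y X)) (Matrix.single p.1 q.1 (1:ℂ)) p.2 q.2)
        = (Matrix.of fun (p q : (B × Y) × m) =>
            f (Matrix.single p.1 q.1 (1:ℂ)) p.2 q.2).submatrix
          (fun r : B × m => ((r.1, y), r.2)) (fun r : B × m => ((r.1, y), r.2)) := by
      ext p q
      simp only [Matrix.of_apply, Matrix.submatrix_apply, embedY_std]
    rw [he]
    exact hpsd.submatrix _
  · intro X
    rw [htr, embedY_trace]

end Embed

section Block

variable {B Y m : Type*} [Fintype B] [DecidableEq B] [Fintype Y] [DecidableEq Y]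
  [Fintype m] [DecidableEq m]

/-- Embed an operator on `(B ⊗ m)` as the `y`-th diagonal block on `(B ⊗ Y) ⊗ m`. -/
def blockE (y : Y) (C : Matrix (B × m) (B × m) ℂ) :
    Matrix ((B × Y) × m) ((B × Y) × m) ℂ :=
  Matrix.of fun P Q => if P.1.2 = y ∧ Q.1.2 = y then C (P.1.1, P.2) (Q.1.1, Q.2) else 0

theorem sumCollapseY {α γ : Type*} [Fintype α] [Fintype γ] (g : (α × Y) × γ → ℂ) (y : Y) :
    (∑ P : (α × Y) × γ, if P.1.2 = y then g P else 0)
      = ∑ b : α, ∑ j : γ, g ((b, y), j) := by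
  rw [Fintype.sum_prod_type, Fintype.sum_prod_type]
  refine Finset.sum_congr rfl fun b _ => ?_
  rw [Finset.sum_eq_single y]
  · simp
  · intro y0 _ h; simp [h]
  · intro h; exact absurd (Finset.mem_univ _) h

theorem blockE_posSemidef {C : Matrix (B × m) (B × m) ℂ} (hC : C.PosSemidef) (y : Y) :
    (blockE y C).PosSemidef := by
  refine Matrix.PosSemidef.of_dotProduct_mulVec_nonneg ?_ ?_
  · ext P Q
    simp only [Matrix.conjTranspose_apply, blockE, Matrix.of_apply]
    by_cases h : Q.1.2 = y ∧ P.1.2 = y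
    · rw [if_pos h, if_pos (And.intro h.2 h.1)]
      have := congrFun (congrFun hC.1 (P.1.1, P.2)) (Q.1.1, Q.2)
      simpa [Matrix.conjTranspose_apply] using this
    · rw [if_neg h, if_neg (fun hh => h ⟨hh.2, hh.1⟩), star_zero]
  · intro x
    set xy : (B × m) → ℂ := fun r => x ((r.1, y), r.2) with hxy
    have inner : ∀ P : (B × Y) × m, (∑ Q, blockE y C P Q * x Q)
        = if P.1.2 = y then C.mulVec xy (P.1.1, P.2) else 0 := by
      intro P
      by_cases hP : P.1.2 = y
      · rw [if_pos hP]
        have hterm : ∀ Q : (B × Y) × m, blockE y C P Q * x Q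
            = if Q.1.2 = y then C (P.1.1, P.2) (Q.1.1, Q.2) * x ((Q.1.1, y), Q.2) else 0 := by
          rintro ⟨⟨b', y'⟩, j⟩
          simp only [blockE, Matrix.of_apply, hP, true_and]
          by_cases h : y' = y
          · subst h; simp
          · simp [h]
        rw [Finset.sum_congr rfl fun Q _ => hterm Q,
          sumCollapseY (fun Q : (B × Y) × m => C (P.1.1, P.2) (Q.1.1, Q.2) * x ((Q.1.1, y), Q.2)) y]
        show _ = ∑ r : B × m, C (P.1.1, P.2) r * xy r
        rw [Fintype.sum_prod_type]
      · rw [if_neg hP]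
        refine Finset.sum_eq_zero fun Q _ => ?_
        simp [blockE, hP]
    have key : star x ⬝ᵥ (blockE y C).mulVec x = star xy ⬝ᵥ C.mulVec xy := by
      show (∑ P, star (x P) * ∑ Q, blockE y C P Q * x Q) = ∑ r, star (xy r) * C.mulVec xy r
      rw [Finset.sum_congr rfl fun P _ => by rw [inner P]]
      have hite : ∀ P : (B × Y) × m,
          star (x P) * (if P.1.2 = y then C.mulVec xy (P.1.1, P.2) else 0)
          = if P.1.2 = y then star (x P) * C.mulVec xy (P.1.1, P.2) else 0 := by
        intro P; split_ifs <;> simp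
      rw [Finset.sum_congr rfl fun P _ => hite P,
        sumCollapseY (fun P : (B × Y) × m => star (x P) * C.mulVec xy (P.1.1, P.2)) y,
        Fintype.sum_prod_type]
    rw [key]
    exact hC.dotProduct_mulVec_nonneg xy

/-- The "measure `Y` then recover" channel built from a family of channels. -/
noncomputable def mpMap (R : Y → Matrix B B ℂ → Matrix m m ℂ) :
    Matrix (B × Y) (B × Y) ℂ → Matrix m m ℂ :=
  fun M => ∑ y, R y (Matrix.of fun b b' => M (b, y) (b', y))

theorem map_zero_of_smul {n : Type*} [Fintype n] [DecidableEq n]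
    {f : Matrix n n ℂ → Matrix m m ℂ}
    (hsmul : ∀ (c : ℂ) (M : Matrix n n ℂ), f (c • M) = c • f M) : f 0 = 0 := by
  have := hsmul 0 0
  simpa using this

theorem mpMap_embedY {R : Y → Matrix B B ℂ → Matrix m m ℂ}
    (hR : ∀ y, IsCPTP (R y)) (y : Y) (X : Matrix B B ℂ) :
    mpMap R (embedY y X) = R y X := by
  unfold mpMap
  have hterm : ∀ y0 : Y, (Matrix.of fun b b' => embedY y X (b, y0) (b', y0))
      = if y0 = y then X else 0 := by
    intro y0
    ext b b'
    simp only [Matrix.of_apply, embedY]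
    split_ifs <;> simp_all
  rw [Finset.sum_congr rfl fun y0 _ => by rw [hterm y0]]
  rw [Finset.sum_eq_single y]
  · simp
  · intro y0 _ h
    rw [if_neg h]
    exact map_zero_of_smul (hR y0).2.1
  · intro h; exact absurd (Finset.mem_univ _) h

theorem slice_std (y : Y) (b b' : B) (y0 y0' : Y) :
    (Matrix.of fun c c' : B => Matrix.single (b, y0) (b', y0') (1:ℂ) (c, y) (c', y))
      = if y0 = y ∧ y0' = y then Matrix.single b b' (1:ℂ) else 0 := by
  ext c c'
  by_cases h0 : y0 = y <;> by_cases h1 : y0' = y <;>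
    simp_all [Matrix.single, Prod.ext_iff] <;> tauto

theorem mpMap_isCPTP {R : Y → Matrix B B ℂ → Matrix m m ℂ}
    (hR : ∀ y, IsCPTP (R y)) : IsCPTP (mpMap R) := by
  refine ⟨?_, ?_, ?_, ?_⟩
  · intro M N
    unfold mpMap
    rw [← Finset.sum_add_distrib]
    refine Finset.sum_congr rfl fun y _ => ?_
    have hs : (Matrix.of fun b b' => (M + N) (b, y) (b', y))
        = (Matrix.of fun b b' => M (b, y) (b', y))
          + (Matrix.of fun b b' => N (b, y) (b', y)) := by
      ext b b'; simp
    rw [hs, (hR y).1]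
  · intro c M
    unfold mpMap
    rw [Finset.smul_sum]
    refine Finset.sum_congr rfl fun y _ => ?_
    have hs : (Matrix.of fun b b' => (c • M) (b, y) (b', y))
        = c • (Matrix.of fun b b' => M (b, y) (b', y)) := by
      ext b b'; simp
    rw [hs, (hR y).2.1]
  · have he : (Matrix.of fun (P Q : (B × Y) × m) =>
        mpMap R (Matrix.single P.1 Q.1 (1:ℂ)) P.2 Q.2)
        = ∑ y, blockE y (Matrix.of fun (p q : B × m) =>
            R y (Matrix.single p.1 q.1 (1:ℂ)) p.2 q.2) := by
      ext ⟨⟨b, y0⟩, i⟩ ⟨⟨b', y0'⟩, j⟩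
      show mpMap R (Matrix.single (b, y0) (b', y0') (1:ℂ)) i j = _
      unfold mpMap
      rw [Matrix.sum_apply, Matrix.sum_apply]
      rw [Finset.sum_congr rfl fun y _ => by rw [slice_std y b b' y0 y0']]
      have hterm : ∀ y : Y,
          (R y (if y0 = y ∧ y0' = y then Matrix.single b b' (1:ℂ) else 0)) i j
          = if y0 = y ∧ y0' = y then R y (Matrix.single b b' (1:ℂ)) i j else 0 := by
        intro y
        split_ifs with h
        · rfl
        · rw [map_zero_of_smul (hR y).2.1]; rfl
      rw [Finset.sum_congr rfl fun y _ => hterm y]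
      have hterm2 : ∀ y : Y, blockE y (Matrix.of fun (p q : B × m) =>
            R y (Matrix.single p.1 q.1 (1:ℂ)) p.2 q.2) ((b, y0), i) ((b', y0'), j)
          = if y0 = y ∧ y0' = y then R y (Matrix.single b b' (1:ℂ)) i j else 0 := by
        intro y
        simp only [blockE, Matrix.of_apply]
      rw [Finset.sum_congr rfl fun y _ => hterm2 y]
    rw [he]
    have : ∀ s : Finset Y, (∑ y ∈ s, blockE y (Matrix.of fun (p q : B × m) =>
        R y (Matrix.single p.1 q.1 (1:ℂ)) p.2 q.2)).PosSemidef := by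
      intro s
      induction s using Finset.induction with
      | empty => simp; exact Matrix.PosSemidef.zero
      | insert _ _ h ih =>
        rw [Finset.sum_insert h]
        exact (blockE_posSemidef (hR _).2.2.1 _).add ih
    exact this Finset.univ
  · intro M
    unfold mpMap
    rw [Matrix.trace_sum]
    rw [Finset.sum_congr rfl fun y _ => (hR y).2.2.2 _]
    simp only [Matrix.trace, Matrix.diag, Matrix.of_apply]
    rw [Finset.sum_comm]
    exact (Fintype.sum_prod_type (f := fun x : B × Y => M x x)).symm

end Block

section Main

variable {B Y : Type*} [Fintype B] [DecidableEq B] [Fintype Y] [DecidableEq Y]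

theorem big_apply {dA : ℕ} (p : Y → ℝ) (ρ : Y → Matrix (Fin dA × B) (Fin dA × B) ℂ)
    (a a' : Fin dA) (b b' : B) (y y' : Y) :
    (Matrix.reindex (Equiv.prodAssoc (Fin dA) B Y) (Equiv.prodAssoc (Fin dA) B Y)
      (∑ y0, (p y0 : ℂ) • (ρ y0 ⊗ₖ Matrix.single y0 y0 (1 : ℂ))))
      (a, (b, y)) (a', (b', y'))
    = if y = y' then (p y : ℂ) * ρ y (a, b) (a', b') else 0 := by
  simp only [Matrix.reindex_apply, Matrix.submatrix_apply, Equiv.prodAssoc_symm_apply,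
    Matrix.sum_apply, Matrix.smul_apply, Matrix.kroneckerMap_apply, smul_eq_mul]
  have hterm : ∀ y0 : Y,
      (p y0 : ℂ) * (ρ y0 (a, b) (a', b') * Matrix.single y0 y0 (1:ℂ) y y')
      = if y0 = y ∧ y0 = y' then (p y0 : ℂ) * ρ y0 (a, b) (a', b') else 0 := by
    intro y0
    simp only [Matrix.single, Matrix.of_apply]
    split_ifs <;> ring
  rw [Finset.sum_congr rfl fun y0 _ => hterm y0]
  by_cases h : y = y'
  · subst h
    rw [if_pos rfl]
    simp
  · rw [if_neg h]
    refine Finset.sum_eq_zero fun y0 _ => if_neg ?_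
    rintro ⟨rfl, rfl⟩
    exact h rfl

theorem idTensor_big {dA : ℕ} (p : Y → ℝ) (ρ : Y → Matrix (Fin dA × B) (Fin dA × B) ℂ)
    (f : Matrix (B × Y) (B × Y) ℂ → Matrix (Fin dA) (Fin dA) ℂ)
    (hadd : ∀ M N, f (M + N) = f M + f N)
    (hsmul : ∀ (c : ℂ) M, f (c • M) = c • f M) :
    idTensor f
        (Matrix.reindex (Equiv.prodAssoc (Fin dA) B Y) (Equiv.prodAssoc (Fin dA) B Y)
          (∑ y, (p y : ℂ) • (ρ y ⊗ₖ Matrix.single y y (1 : ℂ))))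
      = ∑ y, (p y : ℂ) • idTensor (fun X => f (embedY y X)) (ρ y) := by
  ext ⟨a, i⟩ ⟨a', j⟩
  have hslice : (Matrix.of fun c c' : B × Y =>
      (Matrix.reindex (Equiv.prodAssoc (Fin dA) B Y) (Equiv.prodAssoc (Fin dA) B Y)
        (∑ y, (p y : ℂ) • (ρ y ⊗ₖ Matrix.single y y (1 : ℂ)))) (a, c) (a', c'))
      = ∑ y, (p y : ℂ) • embedY y (Matrix.of fun b b' => ρ y (a, b) (a', b')) := by
    ext ⟨b, y⟩ ⟨b', y'⟩
    rw [Matrix.of_apply, big_apply p ρ a a' b b' y y', Matrix.sum_apply]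
    have hterm : ∀ y0 : Y,
        ((p y0 : ℂ) • embedY y0 (Matrix.of fun b b' => ρ y0 (a, b) (a', b'))) (b, y) (b', y')
        = if y = y0 ∧ y' = y0 then (p y0 : ℂ) * ρ y0 (a, b) (a', b') else 0 := by
      intro y0
      simp only [Matrix.smul_apply, embedY, Matrix.of_apply, smul_eq_mul]
      split_ifs <;> simp
    rw [Finset.sum_congr rfl fun y0 _ => hterm y0]
    by_cases h : y = y'
    · subst h
      rw [if_pos rfl]
      simp
    · rw [if_neg h]
      refine (Finset.sum_eq_zero ?_).symm
      intro y0 _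
      have hcon : ¬ (y = y0 ∧ y' = y0) := by
        rintro ⟨rfl, h2⟩; exact h h2.symm
      rw [if_neg hcon]
  show f _ i j = _
  rw [hslice]
  let f' : Matrix (B × Y) (B × Y) ℂ →ₗ[ℂ] Matrix (Fin dA) (Fin dA) ℂ :=
    { toFun := f, map_add' := hadd, map_smul' := hsmul }
  show f' (∑ y, (p y : ℂ) • embedY y _) i j = _
  rw [map_sum, Matrix.sum_apply, Matrix.sum_apply]
  refine Finset.sum_congr rfl fun y _ => ?_
  rw [_root_.map_smul]
  rfl

theorem value_big {dA : ℕ} (p : Y → ℝ) (ρ : Y → Matrix (Fin dA × B) (Fin dA × B) ℂ)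
    (f : Matrix (B × Y) (B × Y) ℂ → Matrix (Fin dA) (Fin dA) ℂ)
    (hadd : ∀ M N, f (M + N) = f M + f N)
    (hsmul : ∀ (c : ℂ) M, f (c • M) = c • f M) :
    (star (mesVec dA) ⬝ᵥ (idTensor f
        (Matrix.reindex (Equiv.prodAssoc (Fin dA) B Y) (Equiv.prodAssoc (Fin dA) B Y)
          (∑ y, (p y : ℂ) • (ρ y ⊗ₖ Matrix.single y y (1 : ℂ))))).mulVec
        (mesVec dA)).re
      = ∑ y, p y * SFv (fun X => f (embedY y X)) (ρ y) := by
  rw [idTensor_big p ρ f hadd hsmul,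
    quad_sum Finset.univ (fun y => (p y : ℂ))
      (fun y => idTensor (fun X => f (embedY y X)) (ρ y)) (mesVec dA)]
  rw [Complex.re_sum]
  exact Finset.sum_congr rfl fun y _ => Complex.re_ofReal_mul _ _

theorem singletFraction_qc' {dA : ℕ} (hdA : 0 < dA)
    (p : Y → ℝ) (hp : ∀ y, 0 ≤ p y)
    (ρ : Y → Matrix (Fin dA × B) (Fin dA × B) ℂ) :
    singletFraction dA
        (Matrix.reindex (Equiv.prodAssoc (Fin dA) B Y) (Equiv.prodAssoc (Fin dA) B Y)
          (∑ y, (p y : ℂ) • (ρ y ⊗ₖ Matrix.single y y (1 : ℂ)))) =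
      ∑ y, p y * singletFraction dA (ρ y) ∧
    ∃ R : Y → (Matrix B B ℂ → Matrix (Fin dA) (Fin dA) ℂ),
      (∀ y, IsCPTP (R y)) ∧
      (star (mesVec dA) ⬝ᵥ
        (idTensor
          (fun M : Matrix (B × Y) (B × Y) ℂ =>
            ∑ y, R y (Matrix.of fun b b' => M (b, y) (b', y)))
          (Matrix.reindex (Equiv.prodAssoc (Fin dA) B Y) (Equiv.prodAssoc (Fin dA) B Y)
            (∑ y, (p y : ℂ) • (ρ y ⊗ₖ Matrix.single y y (1 : ℂ))))).mulVec
          (mesVec dA)).re =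
        ∑ y, p y * singletFraction dA (ρ y) := by
  choose R hR1 hR2 using fun y => sf_attained hdA (ρ y)
  have hgCPTP : IsCPTP (mpMap R) := mpMap_isCPTP hR1
  have hgval : (star (mesVec dA) ⬝ᵥ
      (idTensor (mpMap R)
        (Matrix.reindex (Equiv.prodAssoc (Fin dA) B Y) (Equiv.prodAssoc (Fin dA) B Y)
          (∑ y, (p y : ℂ) • (ρ y ⊗ₖ Matrix.single y y (1 : ℂ))))).mulVec
        (mesVec dA)).re
      = ∑ y, p y * singletFraction dA (ρ y) := by
    rw [value_big p ρ (mpMap R) hgCPTP.1 hgCPTP.2.1]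
    refine Finset.sum_congr rfl fun y _ => ?_
    congr 1
    rw [← hR2 y]
    unfold SFv
    rw [idTensor_congr (fun X => mpMap_embedY hR1 y X) (ρ y)]
  have hmain : singletFraction dA
      (Matrix.reindex (Equiv.prodAssoc (Fin dA) B Y) (Equiv.prodAssoc (Fin dA) B Y)
        (∑ y, (p y : ℂ) • (ρ y ⊗ₖ Matrix.single y y (1 : ℂ)))) =
      ∑ y, p y * singletFraction dA (ρ y) := by
    apply le_antisymm
    · rw [singletFraction_def]
      refine csSup_le (sf_nonempty_set hdA _) ?_
      rintro x ⟨f, hf, rfl⟩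
      unfold SFv
      rw [value_big p ρ f hf.1 hf.2.1]
      refine Finset.sum_le_sum fun y _ => ?_
      exact mul_le_mul_of_nonneg_left
        (SFv_le_singletFraction (comp_embedY_isCPTP hf y) (ρ y)) (hp y)
    · rw [← hgval]
      exact SFv_le_singletFraction hgCPTP _
  exact ⟨hmain, R, hR1, by rw [show (fun M : Matrix (B × Y) (B × Y) ℂ =>
      ∑ y, R y (Matrix.of fun b b' => M (b, y) (b', y))) = mpMap R from rfl, hgval]⟩

end Main

/-- The maximal singlet fraction of a quantum-classical state
`ρ_ABY = Σ_y p(y) ρ_AB^y ⊗ |y⟩⟨y|_Y` splits as the convex combination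
`F_Φ(ρ_ABY) = Σ_y p(y) F_Φ(ρ_AB^y)`, and the optimum is attained by first
measuring `Y` and then applying a `y`-dependent recovery channel on `B`. -/
theorem singletFraction_qc {B Y : Type*}
    [Fintype B] [DecidableEq B] [Fintype Y] [DecidableEq Y]
    (dA : ℕ) (hdA : 0 < dA)
    (p : Y → ℝ) (hp : ∀ y, 0 ≤ p y) (hp1 : ∑ y, p y = 1)
    (ρ : Y → Matrix (Fin dA × B) (Fin dA × B) ℂ)
    (hρ : ∀ y, (ρ y).PosSemidef) (hρtr : ∀ y, (ρ y).trace = 1) :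
    singletFraction dA
        (Matrix.reindex (Equiv.prodAssoc (Fin dA) B Y) (Equiv.prodAssoc (Fin dA) B Y)
          (∑ y, (p y : ℂ) • (ρ y ⊗ₖ Matrix.single y y (1 : ℂ)))) =
      ∑ y, p y * singletFraction dA (ρ y) ∧
    ∃ R : Y → (Matrix B B ℂ → Matrix (Fin dA) (Fin dA) ℂ),
      (∀ y, IsCPTP (R y)) ∧
      (star (mesVec dA) ⬝ᵥ
        (idTensor
          (fun M : Matrix (B × Y) (B × Y) ℂ =>
            ∑ y, R y (Matrix.of fun b b' => M (b, y) (b', y)))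
          (Matrix.reindex (Equiv.prodAssoc (Fin dA) B Y) (Equiv.prodAssoc (Fin dA) B Y)
            (∑ y, (p y : ℂ) • (ρ y ⊗ₖ Matrix.single y y (1 : ℂ))))).mulVec
          (mesVec dA)).re =
        ∑ y, p y * singletFraction dA (ρ y) := by
  exact singletFraction_qc' hdA p hp ρ
end

section
/- For a channel W : A → B between systems of dimensions d_A and d_B, let F_D(W) = max_{D∈CPTP(B→A)} ⟨Φ^{d_A}|(id ⊗ D∘W)(Φ^{d_A})|Φ^{d_A}⟩ be the maximal fidelity of recovery and F_E(W) = max_{E∈CPTP(B→A)} ⟨Φ^{d_B}|(id ⊗ W∘E)(Φ^{d_B})|Φ^{d_B}⟩ be the maximal fidelity of preparation; then F_D(W) = (d_B²/d_A²) F_E(W). -/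
open Matrix BigOperators
open scoped ComplexOrder

/-- Entanglement fidelity of a channel `M` on a `d`-dimensional system:
`F_e(M) = ⟨Φ^d|(id ⊗ M)(Φ^d)|Φ^d⟩`. -/
noncomputable def entFidelity (d : ℕ)
    (M : Matrix (Fin d) (Fin d) ℂ → Matrix (Fin d) (Fin d) ℂ) : ℝ :=
  (star (mesVec d) ⬝ᵥ (idTensor M (maxEnt d)).mulVec (mesVec d)).re

/-- The maximal fidelity of recovery of a channel `W : A → B`:
`F_D(W) = max_{D ∈ CPTP(B→A)} F_e(D ∘ W)` (with `|Φ^{d_A}⟩`). -/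
noncomputable def maxFidRecovery (dA dB : ℕ)
    (W : Matrix (Fin dA) (Fin dA) ℂ → Matrix (Fin dB) (Fin dB) ℂ) : ℝ :=
  sSup {x : ℝ | ∃ D : Matrix (Fin dB) (Fin dB) ℂ → Matrix (Fin dA) (Fin dA) ℂ,
    IsCPTP D ∧ x = entFidelity dA (fun M => D (W M))}

/-- The maximal fidelity of preparation of a channel `W : A → B`:
`F_E(W) = max_{E ∈ CPTP(B→A)} F_e(W ∘ E)` (with `|Φ^{d_B}⟩`). -/
noncomputable def maxFidPreparation (dA dB : ℕ)
    (W : Matrix (Fin dA) (Fin dA) ℂ → Matrix (Fin dB) (Fin dB) ℂ) : ℝ :=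
  sSup {x : ℝ | ∃ E : Matrix (Fin dB) (Fin dB) ℂ → Matrix (Fin dA) (Fin dA) ℂ,
    IsCPTP E ∧ x = entFidelity dB (fun M => W (E M))}

open scoped Pointwise

lemma entFid_formula (d : ℕ) (M : Matrix (Fin d) (Fin d) ℂ → Matrix (Fin d) (Fin d) ℂ)
    (hM : ∀ (c : ℂ) N, M (c • N) = c • M N) :
    entFidelity d M
      = ((1 / (d:ℂ)^2) * ∑ i, ∑ j, M (Matrix.single i j 1) i j).re := by
  have hinner : ∀ p q : Fin d × Fin d,
      (Matrix.of fun b b' => maxEnt d (p.1, b) (q.1, b'))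
        = (1 / (d:ℂ)) • Matrix.single p.1 q.1 1 := by
    intro p q
    ext b b'
    simp [maxEnt, Matrix.single, Matrix.smul_apply, eq_comm]
  unfold entFidelity idTensor
  simp only [hinner, hM]
  rcases Nat.eq_zero_or_pos d with hd | hd
  · subst hd; simp [dotProduct]
  have hs : ((Real.sqrt d : ℂ)) * ((Real.sqrt d : ℂ)) = (d : ℂ) := by
    rw [← Complex.ofReal_mul, Real.mul_self_sqrt (Nat.cast_nonneg d)]; norm_cast
  simp only [dotProduct, Matrix.mulVec, dotProduct, mesVec, Pi.star_apply,
    Fintype.sum_prod_type]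
  simp only [apply_ite (star : ℂ → ℂ), star_zero, star_div₀, star_one, Complex.star_def, Complex.conj_ofReal]
  rw [Finset.sum_comm]
  congr 1
  simp only [Matrix.of_apply, Matrix.smul_apply, smul_eq_mul, mul_ite, mul_zero, mul_one,
    ite_mul, zero_mul, Finset.sum_ite_eq, Finset.sum_ite_eq', Finset.mem_univ, if_true]
  rw [Finset.mul_sum]
  refine Finset.sum_congr rfl fun i _ => ?_
  rw [Finset.mul_sum, Finset.mul_sum]
  refine Finset.sum_congr rfl fun j _ => ?_
  have hd0 : (d:ℂ) ≠ 0 := by exact_mod_cast hd.ne'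
  have hs0 : ((Real.sqrt d : ℝ) : ℂ) ≠ 0 := by
    intro h
    rw [h, mul_zero] at hs
    exact hd0 hs.symm
  rw [← hs]
  field_simp

lemma map_finsum_mat {n m : Type*} [Fintype n] [DecidableEq n]
    (f : Matrix n n ℂ → Matrix m m ℂ)
    (hadd : ∀ M N, f (M + N) = f M + f N)
    {ι : Type*} (s : Finset ι) (g : ι → Matrix n n ℂ) :
    f (∑ i ∈ s, g i) = ∑ i ∈ s, f (g i) :=
  map_sum (AddMonoidHom.mk' f hadd) g s

lemma sum_exchange (dA dB : ℕ)
    (W : Matrix (Fin dA) (Fin dA) ℂ → Matrix (Fin dB) (Fin dB) ℂ)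
    (hWa : ∀ M N, W (M + N) = W M + W N) (hWs : ∀ (c : ℂ) M, W (c • M) = c • W M)
    (D : Matrix (Fin dB) (Fin dB) ℂ → Matrix (Fin dA) (Fin dA) ℂ)
    (hDa : ∀ M N, D (M + N) = D M + D N) (hDs : ∀ (c : ℂ) M, D (c • M) = c • D M) :
    ∑ i, ∑ j, D (W (Matrix.single i j 1)) i j
      = ∑ k, ∑ l, W (D (Matrix.single k l 1)) k l := by
  have expand : ∀ (p : ℕ) (N : Matrix (Fin p) (Fin p) ℂ),
      N = ∑ k, ∑ l, N k l • Matrix.single k l (1 : ℂ) := by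
    intro p N
    ext k l
    simp [Matrix.single, Matrix.sum_apply, Matrix.smul_apply, ite_and,
      Finset.sum_ite_eq, Finset.sum_ite_eq', eq_comm]
  have lhs : ∀ i j : Fin dA, D (W (Matrix.single i j 1)) i j
      = ∑ k, ∑ l, W (Matrix.single i j 1) k l
          * D (Matrix.single k l 1) i j := by
    intro i j
    conv_lhs => rw [expand dB (W (Matrix.single i j 1))]
    rw [map_finsum_mat D hDa]
    simp only [map_finsum_mat D hDa, hDs, Matrix.sum_apply, Matrix.smul_apply, smul_eq_mul]
  have rhs : ∀ k l : Fin dB, W (D (Matrix.single k l 1)) k l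
      = ∑ i, ∑ j, D (Matrix.single k l 1) i j
          * W (Matrix.single i j 1) k l := by
    intro k l
    conv_lhs => rw [expand dA (D (Matrix.single k l 1))]
    rw [map_finsum_mat W hWa]
    simp only [map_finsum_mat W hWa, hWs, Matrix.sum_apply, Matrix.smul_apply, smul_eq_mul]
  simp only [lhs, rhs]
  refine Eq.trans (Finset.sum_congr rfl fun i _ => by rw [Finset.sum_comm]) ?_
  refine Eq.trans Finset.sum_comm ?_
  refine Eq.trans (Finset.sum_congr rfl fun k _ =>
    Finset.sum_congr rfl fun i _ => by rw [Finset.sum_comm]) ?_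
  refine Eq.trans (Finset.sum_congr rfl fun k _ => by rw [Finset.sum_comm]) ?_
  exact Finset.sum_congr rfl fun k _ => Finset.sum_congr rfl fun l _ =>
    Finset.sum_congr rfl fun i _ => Finset.sum_congr rfl fun j _ => mul_comm _ _

lemma entFid_relation (dA dB : ℕ) (hdA : 0 < dA) (hdB : 0 < dB)
    (W : Matrix (Fin dA) (Fin dA) ℂ → Matrix (Fin dB) (Fin dB) ℂ)
    (hWa : ∀ M N, W (M + N) = W M + W N) (hWs : ∀ (c : ℂ) M, W (c • M) = c • W M)
    (f : Matrix (Fin dB) (Fin dB) ℂ → Matrix (Fin dA) (Fin dA) ℂ)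
    (hfa : ∀ M N, f (M + N) = f M + f N) (hfs : ∀ (c : ℂ) M, f (c • M) = c • f M) :
    entFidelity dA (fun M => f (W M))
      = ((dB : ℝ) ^ 2 / (dA : ℝ) ^ 2) * entFidelity dB (fun M => W (f M)) := by
  rw [entFid_formula dA _ (fun c N => by rw [hWs, hfs]),
      entFid_formula dB _ (fun c N => by rw [hfs, hWs]),
      sum_exchange dA dB W hWa hWs f hfa hfs]
  have h1 : (1 / (dA:ℂ)^2) = ((1 / (dA:ℝ)^2 : ℝ) : ℂ) := by push_cast; ring
  have h2 : (1 / (dB:ℂ)^2) = ((1 / (dB:ℝ)^2 : ℝ) : ℂ) := by push_cast; ring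
  rw [h1, h2, Complex.re_ofReal_mul, Complex.re_ofReal_mul]
  have hA : ((dA:ℝ)) ≠ 0 := by positivity
  have hB : ((dB:ℝ)) ≠ 0 := by positivity
  field_simp

/-- Relation between the maximal fidelity of recovery and of preparation:
`F_D(W) = (d_B²/d_A²) F_E(W)`. -/
theorem maxFidRecovery_eq_maxFidPreparation (dA dB : ℕ) (hdA : 0 < dA) (hdB : 0 < dB)
    (W : Matrix (Fin dA) (Fin dA) ℂ → Matrix (Fin dB) (Fin dB) ℂ)
    (hW : IsCPTP W) :
    maxFidRecovery dA dB W = ((dB : ℝ) ^ 2 / (dA : ℝ) ^ 2) * maxFidPreparation dA dB W := by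
  have hc : (0:ℝ) ≤ (dB : ℝ) ^ 2 / (dA : ℝ) ^ 2 := by positivity
  have hset : {x : ℝ | ∃ D : Matrix (Fin dB) (Fin dB) ℂ → Matrix (Fin dA) (Fin dA) ℂ,
        IsCPTP D ∧ x = entFidelity dA (fun M => D (W M))}
      = ((dB : ℝ) ^ 2 / (dA : ℝ) ^ 2) •
        {x : ℝ | ∃ E : Matrix (Fin dB) (Fin dB) ℂ → Matrix (Fin dA) (Fin dA) ℂ,
          IsCPTP E ∧ x = entFidelity dB (fun M => W (E M))} := by
    ext x
    constructor
    · rintro ⟨D, hD, rfl⟩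
      refine ⟨entFidelity dB (fun M => W (D M)), ⟨D, hD, rfl⟩, ?_⟩
      simp only [smul_eq_mul]
      rw [← entFid_relation dA dB hdA hdB W hW.1 hW.2.1 D hD.1 hD.2.1]
    · rintro ⟨y, ⟨E, hE, rfl⟩, rfl⟩
      refine ⟨E, hE, ?_⟩
      simp only [smul_eq_mul]
      rw [entFid_relation dA dB hdA hdB W hW.1 hW.2.1 E hE.1 hE.2.1]
  unfold maxFidRecovery maxFidPreparation
  rw [hset, Real.sSup_smul_of_nonneg hc, smul_eq_mul]
end
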